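/- In the generic-coding construction, the map x ↦ x̃ from Set ℕ to (ℕ → Bool) is injective: if x ≠ y then x̃ ≠ ỹ. -/

import Mathlib

open scoped Classical

/-- `s` is an initial segment of `g : ℕ → Bool`: the finite partial function given by `s`
agrees with `g` on its domain. -/
def InitSeg (s : List Bool) (g : ℕ → Bool) : Prop :=
  ∀ k, (h : k < s.length) → s.get ⟨k, h⟩ = g k

/-- A set of binary strings is dense if every string has an extension in it,
where `s` extends `t` iff `t` is a prefix of `s`. -/
def DenseStrings (D : Set (List Bool)) : Prop :=
  ∀ t : List Bool, ∃ s ∈ D, t <+: s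

/-- `s` properly extends `t`: `t` is a proper prefix of `s`. -/
def ProperExt (s t : List Bool) : Prop := t <+: s ∧ t ≠ s

/-- Two strings are incompatible if neither is a prefix of the other. -/
def Incompat (s t : List Bool) : Prop := ¬s <+: t ∧ ¬t <+: s

/-- The minimal element of a set of strings: the one of least code under the canonical
(`Encodable`) encoding of `List Bool` into `ℕ` (junk value `[]` if the set is empty). -/
noncomputable def minString (S : Set (List Bool)) : List Bool :=
  ((Encodable.decode (sInf (Encodable.encode '' S)) : Option (List Bool))).getD []

/-- The recursively defined sequence of conditions `c i` coding `x` along the dense family `D`: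
`c 0 = []`; `e i` is the minimal element of `D i` properly extending `c i`;
`c (i+1) = e i` if `i ∈ x`, and otherwise `c (i+1)` is the minimal element of `D i`
properly extending `c i` and incompatible with `e i`. -/
noncomputable def cSeq (D : ℕ → Set (List Bool)) (x : Set ℕ) : ℕ → List Bool
  | 0 => []
  | i + 1 =>
    let ci := cSeq D x i
    let ei := minString {s ∈ D i | ProperExt s ci}
    if i ∈ x then ei
    else minString {s ∈ D i | ProperExt s ci ∧ Incompat s ei}

/-- `e i`: the minimal element of `D i` properly extending `c i`. -/
noncomputable def eSeq (D : ℕ → Set (List Bool)) (x : Set ℕ) (i : ℕ) : List Bool :=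
  minString {s ∈ D i | ProperExt s (cSeq D x i)}

/-- `x̃`: the unique function having every `c i` as an initial segment (when each `D i` is
dense, `c (i+1)` properly extends `c i`, so `c (k+1)` has length `> k` and determines bit `k`). -/
noncomputable def tilde (D : ℕ → Set (List Bool)) (x : Set ℕ) : ℕ → Bool :=
  fun k => (cSeq D x (k + 1)).getD k false

/-!
At the first `i` where `x` and `y` differ, the conditions `c i` still coincide, and one of
`x, y` continues with `e i` while the other continues with a string incompatible with `e i`.
Since every `c j` is an initial segment of the generic it codes, and two initial segments of
one function are comparable, the two generics must differ.
-/

lemma minString_mem {S : Set (List Bool)} (h : S.Nonempty) : minString S ∈ S := by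
  obtain ⟨s, hs, he⟩ := Nat.sInf_mem (h.image Encodable.encode)
  unfold minString
  rw [← he, Encodable.encodek]
  simpa using hs

lemma ProperExt.length_lt {s t : List Bool} (h : ProperExt s t) : t.length < s.length :=
  h.1.length_le.lt_of_ne fun hlen => h.2 (h.1.eq_of_length hlen)

lemma properExt_of_append_singleton_prefix {s c : List Bool} {a : Bool} (h : c ++ [a] <+: s) :
    ProperExt s c := by
  refine ⟨(c.prefix_append [a]).trans h, fun hcs => ?_⟩
  have := h.length_le
  simp [hcs] at this

lemma Incompat.symm {s t : List Bool} (h : Incompat s t) : Incompat t s := ⟨h.2, h.1⟩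

lemma incompat_of_getElem_ne {s t : List Bool} {k : ℕ} (hs : k < s.length) (ht : k < t.length)
    (h : s[k] ≠ t[k]) : Incompat s t :=
  ⟨fun hst => h (hst.getElem hs), fun hts => h (hts.getElem ht).symm⟩

lemma InitSeg.prefix_of_length_le {s t : List Bool} {g : ℕ → Bool} (hs : InitSeg s g)
    (ht : InitSeg t g) (hle : s.length ≤ t.length) : s <+: t :=
  List.prefix_iff_getElem.2 ⟨hle, fun k hk => by
    simpa using (hs k hk).trans (ht k (hk.trans_le hle)).symm⟩

lemma InitSeg.not_incompat {s t : List Bool} {g : ℕ → Bool} (hs : InitSeg s g)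
    (ht : InitSeg t g) : ¬Incompat s t := by
  rintro ⟨hst, hts⟩
  rcases le_total s.length t.length with hle | hle
  · exact hst (hs.prefix_of_length_le ht hle)
  · exact hts (ht.prefix_of_length_le hs hle)

lemma DenseStrings.exists_properExt {S : Set (List Bool)} (hS : DenseStrings S)
    (c : List Bool) : ∃ s ∈ S, ProperExt s c := by
  obtain ⟨s, hs, hpre⟩ := hS (c ++ [false])
  exact ⟨s, hs, properExt_of_append_singleton_prefix hpre⟩

-- Extend `c` by the bit opposite to the one `e` puts at position `c.length`.
lemma DenseStrings.exists_properExt_incompat {S : Set (List Bool)} (hS : DenseStrings S)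
    {c e : List Bool} (he : ProperExt e c) : ∃ s ∈ S, ProperExt s c ∧ Incompat s e := by
  have hce := he.length_lt
  obtain ⟨s, hs, hpre⟩ := hS (c ++ [!e[c.length]])
  have hcs : c.length < s.length := (properExt_of_append_singleton_prefix hpre).length_lt
  have hbit : s[c.length] = !e[c.length] := by
    simpa using (hpre.getElem (i := c.length) (by simp)).symm
  refine ⟨s, hs, properExt_of_append_singleton_prefix hpre,
    incompat_of_getElem_ne hcs hce ?_⟩
  simp [hbit]

lemma cSeq_succ (D : ℕ → Set (List Bool)) (x : Set ℕ) (i : ℕ) :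
    cSeq D x (i + 1) = if i ∈ x then eSeq D x i
      else minString {s ∈ D i | ProperExt s (cSeq D x i) ∧ Incompat s (eSeq D x i)} :=
  rfl

lemma eSeq_properExt {D : ℕ → Set (List Bool)} (hD : ∀ i, DenseStrings (D i)) (x : Set ℕ)
    (i : ℕ) : ProperExt (eSeq D x i) (cSeq D x i) :=
  (minString_mem ((hD i).exists_properExt (cSeq D x i))).2

lemma cSeq_succ_properExt {D : ℕ → Set (List Bool)} (hD : ∀ i, DenseStrings (D i))
    (x : Set ℕ) (i : ℕ) : ProperExt (cSeq D x (i + 1)) (cSeq D x i) := by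
  rw [cSeq_succ]
  split_ifs
  · exact eSeq_properExt hD x i
  · exact (minString_mem ((hD i).exists_properExt_incompat (eSeq_properExt hD x i))).2.1

lemma cSeq_prefix_of_le {D : ℕ → Set (List Bool)} (hD : ∀ i, DenseStrings (D i))
    (x : Set ℕ) {i j : ℕ} (hij : i ≤ j) : cSeq D x i <+: cSeq D x j := by
  induction j, hij using Nat.le_induction with
  | base => exact List.prefix_refl _
  | succ j _ ih => exact ih.trans (cSeq_succ_properExt hD x j).1

lemma le_length_cSeq {D : ℕ → Set (List Bool)} (hD : ∀ i, DenseStrings (D i)) (x : Set ℕ)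
    (i : ℕ) : i ≤ (cSeq D x i).length := by
  induction i with
  | zero => exact Nat.zero_le _
  | succ i ih => exact ih.trans_lt (cSeq_succ_properExt hD x i).length_lt

lemma initSeg_cSeq {D : ℕ → Set (List Bool)} (hD : ∀ i, DenseStrings (D i)) (x : Set ℕ)
    (i : ℕ) : InitSeg (cSeq D x i) (tilde D x) := by
  intro k hk
  have hk' : k < (cSeq D x (k + 1)).length :=
    (le_length_cSeq hD x (k + 1)).trans_lt' k.lt_succ_self
  rw [tilde, List.getD_eq_getElem _ _ hk', List.get_eq_getElem]
  rcases le_total i (k + 1) with hle | hle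
  · exact (cSeq_prefix_of_le hD x hle).getElem hk
  · exact ((cSeq_prefix_of_le hD x hle).getElem hk').symm

lemma cSeq_congr (D : ℕ → Set (List Bool)) {x y : Set ℕ} {i : ℕ}
    (h : ∀ j < i, (j ∈ x ↔ j ∈ y)) : cSeq D x i = cSeq D y i := by
  induction i with
  | zero => rfl
  | succ i ih =>
    have hc := ih fun j hj => h j (hj.trans i.lt_succ_self)
    simp only [cSeq_succ, eSeq, hc, h i i.lt_succ_self]

lemma cSeq_succ_incompat {D : ℕ → Set (List Bool)} (hD : ∀ i, DenseStrings (D i))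
    {x y : Set ℕ} {i : ℕ} (hc : cSeq D x i = cSeq D y i) (hx : i ∈ x) (hy : i ∉ y) :
    Incompat (cSeq D x (i + 1)) (cSeq D y (i + 1)) := by
  have he : eSeq D y i = eSeq D x i := by simp only [eSeq, hc]
  rw [cSeq_succ, cSeq_succ, if_pos hx, if_neg hy, he, ← hc]
  exact (minString_mem ((hD i).exists_properExt_incompat (eSeq_properExt hD x i))).2.2.symm

lemma cSeq_succ_incompat_of_first_difference {D : ℕ → Set (List Bool)}
    (hD : ∀ i, DenseStrings (D i)) {x y : Set ℕ} {i : ℕ} (hbelow : ∀ j < i, (j ∈ x ↔ j ∈ y))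
    (hi : ¬(i ∈ x ↔ i ∈ y)) : Incompat (cSeq D x (i + 1)) (cSeq D y (i + 1)) := by
  by_cases hx : i ∈ x
  · exact cSeq_succ_incompat hD (cSeq_congr D hbelow) hx fun hy => hi (iff_of_true hx hy)
  · have hy : i ∈ y := by tauto
    exact (cSeq_succ_incompat hD (cSeq_congr D hbelow).symm hy hx).symm

/-- The map `x ↦ x̃` is injective: distinct `x, y` yield distinct generics. -/
theorem tilde_injective (D : ℕ → Set (List Bool)) (hD : ∀ i, DenseStrings (D i)) :
    ∀ x y : Set ℕ, x ≠ y → tilde D x ≠ tilde D y := by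
  intro x y hxy htilde
  have hdiff : ∃ i, ¬(i ∈ x ↔ i ∈ y) := by
    by_contra! hsame
    exact hxy (Set.ext hsame)
  have hinc := cSeq_succ_incompat_of_first_difference hD
    (fun j hj => not_not.1 (Nat.find_min hdiff hj)) (Nat.find_spec hdiff)
  exact (initSeg_cSeq hD x _).not_incompat (htilde ▸ initSeg_cSeq hD y _) hinc
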